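/- Let (γ, ℓ, ℓ⁽²⁾) be coordinate hypersurface metric data on U with inverse blocks (P, n, n⁽²⁾) and derived fields F, U, Γ̊, and let τ^{ab} be any smooth symmetric field on U; set τ^b_a := τ^{bc}γ_{ca}. Then the following two identities hold on U: (1) ∇̊_a(τ^{ab}ℓ_b) + τ^{ab}ℓ_b(½n⁽²⁾∂_aℓ⁽²⁾ + F_{ac}n^c) = |det 𝔸|^{−1/2} ∂_a(|det 𝔸|^{1/2} τ^{ab}ℓ_b); (2) ∇̊_bτ^b_a + τ^b_a(½n⁽²⁾∂_bℓ⁽²⁾ + F_{bc}n^c) + τ^{bc}ℓ_cU_{ba} = |det 𝔸|^{−1/2} ∂_b(|det 𝔸|^{1/2} τ^b_a) − ½τ^{bd}∂_aγ_{bd}. (Hence the shell field equations, whose left-hand sides are the expressions on the left above with τ the shell energy–momentum tensor, take in coordinates the stated divergence form.) -/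

import Mathlib

open scoped BigOperators

noncomputable section

namespace HypData

variable {m : ℕ}

/-- Scalar field on ℝ^m. -/
abbrev Sc (m : ℕ) := (Fin m → ℝ) → ℝ
/-- One-index field. -/
abbrev Vec (m : ℕ) := (Fin m → ℝ) → Fin m → ℝ
/-- Two-index field. -/
abbrev Ten (m : ℕ) := (Fin m → ℝ) → Fin m → Fin m → ℝ
/-- Connection coefficients `Γ x c a b = Γ^c_{ab}` (first index upper). -/
abbrev Conn (m : ℕ) := (Fin m → ℝ) → Fin m → Fin m → Fin m → ℝ
/-- Three-index field. -/
abbrev Ten3 (m : ℕ) := (Fin m → ℝ) → Fin m → Fin m → Fin m → ℝ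

/-- Partial derivative of `f` in the `a`-th coordinate direction at `x`. -/
def pd (a : Fin m) (f : Sc m) (x : Fin m → ℝ) : ℝ :=
  fderiv ℝ f x (Pi.single a 1)

/-- Kronecker delta. -/
def kd (a b : Fin m) : ℝ := if a = b then 1 else 0

/-- Equations (EqP1)-(EqP4): `[[P,n],[nᵀ,n2]]` consists of the inverse blocks of
the block matrix `[[γ,ℓ],[ℓᵀ,ℓ2]]`. -/
def InvBlocks (γ : Fin m → Fin m → ℝ) (ℓ : Fin m → ℝ) (ℓ2 : ℝ)
    (P : Fin m → Fin m → ℝ) (n : Fin m → ℝ) (n2 : ℝ) : Prop :=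
  (∀ a b, (∑ c, P a c * γ c b) + n a * ℓ b = kd a b) ∧
  (∀ a, (∑ b, P a b * ℓ b) + ℓ2 * n a = 0) ∧
  ((∑ a, n a * ℓ a) + n2 * ℓ2 = 1) ∧
  (∀ a, (∑ b, γ a b * n b) + n2 * ℓ a = 0)

/-- ∇_a ω_b. -/
def covD1 (Γ : Conn m) (ω : Vec m) (x : Fin m → ℝ) (a b : Fin m) : ℝ :=
  pd a (fun y => ω y b) x - ∑ d, Γ x d a b * ω x d

/-- ∇_a X^b. -/
def covD1U (Γ : Conn m) (X : Vec m) (x : Fin m → ℝ) (a b : Fin m) : ℝ :=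
  pd a (fun y => X y b) x + ∑ d, Γ x b a d * X x d

/-- ∇_a T_{bc}. -/
def covD2 (Γ : Conn m) (T : Ten m) (x : Fin m → ℝ) (a b c : Fin m) : ℝ :=
  pd a (fun y => T y b c) x - (∑ d, Γ x d a b * T x d c) - (∑ d, Γ x d a c * T x b d)

/-- ∇_a T^{bc}. -/
def covD2U (Γ : Conn m) (T : Ten m) (x : Fin m → ℝ) (a b c : Fin m) : ℝ :=
  pd a (fun y => T y b c) x + (∑ d, Γ x b a d * T x d c) + (∑ d, Γ x c a d * T x b d)

/-- ∇_a S^b_c (first index of `S` upper, second lower). -/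
def covD11 (Γ : Conn m) (S : Ten m) (x : Fin m → ℝ) (a b c : Fin m) : ℝ :=
  pd a (fun y => S y b c) x + (∑ d, Γ x b a d * S x d c) - (∑ d, Γ x d a c * S x b d)

/-- ∇_a Q^{bcd}. -/
def covD3U (Γ : Conn m) (Q : Ten3 m) (x : Fin m → ℝ) (a b c d : Fin m) : ℝ :=
  pd a (fun y => Q y b c d) x + (∑ f, Γ x b a f * Q x f c d)
    + (∑ f, Γ x c a f * Q x b f d) + (∑ f, Γ x d a f * Q x b c f)

/-- Curvature `R^a_{bcd} = ∂_cΓ^a_{db} − ∂_dΓ^a_{cb} + Γ^a_{cf}Γ^f_{db} − Γ^a_{df}Γ^f_{cb}`. -/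
def curv (Γ : Conn m) (x : Fin m → ℝ) (a b c d : Fin m) : ℝ :=
  pd c (fun y => Γ y a d b) x - pd d (fun y => Γ y a c b) x
    + (∑ f, Γ x a c f * Γ x f d b) - (∑ f, Γ x a d f * Γ x f c b)

/-- `F_{ab} = ½(∂_aℓ_b − ∂_bℓ_a)`. -/
def Ff (ℓ : Vec m) (x : Fin m → ℝ) (a b : Fin m) : ℝ :=
  (pd a (fun y => ℓ y b) x - pd b (fun y => ℓ y a) x) / 2

/-- `U_{ab} = ½(n^c∂_cγ_{ab} + γ_{cb}∂_an^c + γ_{ac}∂_bn^c + ℓ_a∂_bn⁽²⁾ + ℓ_b∂_an⁽²⁾)`. -/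
def Uf (γ : Ten m) (ℓ : Vec m) (n : Vec m) (n2 : Sc m)
    (x : Fin m → ℝ) (a b : Fin m) : ℝ :=
  ((∑ c, (n x c * pd c (fun y => γ y a b) x + γ x c b * pd a (fun y => n y c) x
      + γ x a c * pd b (fun y => n y c) x))
    + ℓ x a * pd b n2 x + ℓ x b * pd a n2 x) / 2

/-- Metric hypersurface connection `Γ̊^c_{ab}`. -/
def Gam0 (γ : Ten m) (ℓ : Vec m) (P : Ten m) (n : Vec m)
    (x : Fin m → ℝ) (c a b : Fin m) : ℝ :=
  (∑ d, P x c d * (pd a (fun y => γ y b d) x + pd b (fun y => γ y a d) x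
      - pd d (fun y => γ y a b) x)) / 2
  + n x c * (pd a (fun y => ℓ y b) x + pd b (fun y => ℓ y a) x) / 2

/-- The connection `Γ̄^c_{ab} = Γ̊^c_{ab} − n^c Y_{ab}`. -/
def GamB (γ : Ten m) (ℓ : Vec m) (P : Ten m) (n : Vec m) (Y : Ten m)
    (x : Fin m → ℝ) (c a b : Fin m) : ℝ :=
  Gam0 γ ℓ P n x c a b - n x c * Y x a b

/-- `K_{ab} = n⁽²⁾Y_{ab} + U_{ab}`. -/
def Kf (γ : Ten m) (ℓ : Vec m) (n : Vec m) (n2 : Sc m) (Y : Ten m)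
    (x : Fin m → ℝ) (a b : Fin m) : ℝ :=
  n2 x * Y x a b + Uf γ ℓ n n2 x a b

/-- `φ_a = ½n⁽²⁾∂_aℓ⁽²⁾ + n^b(Y_{ab} + F_{ab})`. -/
def phif (ℓ : Vec m) (ℓ2 : Sc m) (n : Vec m) (n2 : Sc m) (Y : Ten m)
    (x : Fin m → ℝ) (a : Fin m) : ℝ :=
  n2 x * pd a ℓ2 x / 2 + ∑ b, n x b * (Y x a b + Ff ℓ x a b)

/-- `Ψ^b_a = P^{bc}(Y_{ac} + F_{ac}) + ½n^b∂_aℓ⁽²⁾`. -/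
def Psif (ℓ : Vec m) (ℓ2 : Sc m) (P : Ten m) (n : Vec m) (Y : Ten m)
    (x : Fin m → ℝ) (b a : Fin m) : ℝ :=
  (∑ c, P x b c * (Y x a c + Ff ℓ x a c)) + n x b * pd a ℓ2 x / 2

/-- Smoothness of a scalar field on `U`. -/
def SmSc (U : Set (Fin m → ℝ)) (f : Sc m) : Prop := ContDiffOn ℝ (⊤ : ℕ∞) f U
/-- Smoothness of a one-index field on `U`. -/
def SmVec (U : Set (Fin m → ℝ)) (f : Vec m) : Prop :=
  ∀ a, ContDiffOn ℝ (⊤ : ℕ∞) (fun x => f x a) U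
/-- Smoothness of a two-index field on `U`. -/
def SmTen (U : Set (Fin m → ℝ)) (f : Ten m) : Prop :=
  ∀ a b, ContDiffOn ℝ (⊤ : ℕ∞) (fun x => f x a b) U

/-- Smooth coordinate hypersurface metric data on `U`. -/
def MetricData (U : Set (Fin m → ℝ)) (γ : Ten m) (ℓ : Vec m) (ℓ2 : Sc m)
    (P : Ten m) (n : Vec m) (n2 : Sc m) : Prop :=
  SmTen U γ ∧ SmVec U ℓ ∧ SmSc U ℓ2 ∧ SmTen U P ∧ SmVec U n ∧ SmSc U n2 ∧
  (∀ x ∈ U, ∀ a b, γ x a b = γ x b a) ∧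
  (∀ x ∈ U, ∀ a b, P x a b = P x b a) ∧
  (∀ x ∈ U, InvBlocks (γ x) (ℓ x) (ℓ2 x) (P x) (n x) (n2 x))

/-- Gauge-transformed `ℓ`. -/
def gaugeL (γ : Ten m) (ℓ : Vec m) (u : Sc m) (V : Vec m) : Vec m :=
  fun x a => u x * (ℓ x a + ∑ b, V x b * γ x a b)

/-- Gauge-transformed `ℓ⁽²⁾`. -/
def gaugeL2 (γ : Ten m) (ℓ : Vec m) (ℓ2 : Sc m) (u : Sc m) (V : Vec m) : Sc m :=
  fun x => u x ^ 2 * (ℓ2 x + 2 * (∑ a, V x a * ℓ x a) + ∑ a, ∑ b, V x a * V x b * γ x a b)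

/-- Gauge-transformed `Y`. -/
def gaugeY (γ : Ten m) (ℓ : Vec m) (Y : Ten m) (u : Sc m) (V : Vec m) : Ten m :=
  fun x a b => u x * Y x a b + (ℓ x a * pd b u x + ℓ x b * pd a u x) / 2
    + ((u x * ∑ c, V x c * pd c (fun y => γ y a b) x)
      + (∑ c, γ x c b * pd a (fun y => u y * V y c) x)
      + (∑ c, γ x a c * pd b (fun y => u y * V y c) x)) / 2

/-- Gauge-transformed `P`. -/
def gaugeP (P : Ten m) (n : Vec m) (n2 : Sc m) (V : Vec m) : Ten m :=
  fun x a b => P x a b + n2 x * V x a * V x b - V x a * n x b - V x b * n x a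

/-- Gauge-transformed `n`. -/
def gaugeN (n : Vec m) (n2 : Sc m) (u : Sc m) (V : Vec m) : Vec m :=
  fun x a => (u x)⁻¹ * (n x a - n2 x * V x a)

/-- Gauge-transformed `n⁽²⁾`. -/
def gaugeN2 (n2 : Sc m) (u : Sc m) : Sc m :=
  fun x => ((u x) ^ 2)⁻¹ * n2 x

/-- Shell energy-momentum tensor `τ^{fa}` built pointwise from the jump `V_{ab}`. -/
def tauP (P : Fin m → Fin m → ℝ) (n : Fin m → ℝ) (n2 : ℝ) (V : Fin m → Fin m → ℝ)
    (f a : Fin m) : ℝ :=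
  (∑ c, ∑ d, (n f * P a c + n a * P f c) * n d * V c d)
  - (∑ c, ∑ d, (n2 * P f c * P a d + P f a * n c * n d) * V c d)
  + (n2 * P f a - n f * n a) * (∑ c, ∑ d, P c d * V c d)

/-- `τ^f_c = −(n⁽²⁾P^{bd} − n^bn^d)(δ^f_dV_{bc} − δ^f_cV_{bd})`. -/
def tauMixP (P : Fin m → Fin m → ℝ) (n : Fin m → ℝ) (n2 : ℝ)
    (V : Fin m → Fin m → ℝ) (f c : Fin m) : ℝ :=
  -(∑ b, ∑ d, (n2 * P b d - n b * n d) * (kd f d * V b c - kd f c * V b d))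

/-- `T^f = (P^{bf}n^c − P^{bc}n^f)V_{bc}`. -/
def tauVecP (P : Fin m → Fin m → ℝ) (n : Fin m → ℝ) (V : Fin m → Fin m → ℝ)
    (f : Fin m) : ℝ :=
  ∑ b, ∑ c, (P b f * n c - P b c * n f) * V b c

/-- The block matrix 𝔸. -/
def blockA (γ : Ten m) (ℓ : Vec m) (ℓ2 : Sc m) (x : Fin m → ℝ) :
    Matrix (Fin m ⊕ Unit) (Fin m ⊕ Unit) ℝ :=
  fun i j =>
    match i, j with
    | Sum.inl a, Sum.inl b => γ x a b
    | Sum.inl a, Sum.inr _ => ℓ x a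
    | Sum.inr _, Sum.inl b => ℓ x b
    | Sum.inr _, Sum.inr _ => ℓ2 x

/-- `det 𝔸` as a scalar field. -/
def detA (γ : Ten m) (ℓ : Vec m) (ℓ2 : Sc m) (x : Fin m → ℝ) : ℝ :=
  (blockA γ ℓ ℓ2 x).det

end HypData

/-!
Both identities are divergence formulas. Jacobi's formula, obtained by differentiating the
Leibniz expansion of `det (𝔸(x)⁻¹ 𝔸(y))` at `y = x`, gives
`∂ₐ log |det 𝔸| = tr(𝔸⁻¹ ∂ₐ𝔸) = P^{cd}∂ₐγ_{cd} + 2nᶜ∂ₐℓ_c + n⁽²⁾∂ₐℓ⁽²⁾`, and the trace `Γ̊ᶜ_{ca}`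
of the connection is half of this minus `½n⁽²⁾∂ₐℓ⁽²⁾ + F_{ac}nᶜ`. Hence, for every vector field
`X`, `∇̊ₐXᵃ + Xᵃ(½n⁽²⁾∂ₐℓ⁽²⁾ + F_{ac}nᶜ) = |det 𝔸|^{-1/2} ∂ₐ(|det 𝔸|^{1/2} Xᵃ)`: this is (1), and
with `Xᵇ = τᵇ_a` it accounts for all of (2) except the term `-Γ̊ᶜ_{ba}τᵇ_c`.
Lowering the index with `γ` and using the inverse-block relations gives
`γ_{cd}Γ̊ᵈ_{ba} = ½(∂_bγ_{ac} + ∂ₐγ_{bc} - ∂_cγ_{ba}) + ℓ_c U_{ba}`, where `U` enters through the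
derivative of `γ_{ad}nᵈ + n⁽²⁾ℓₐ = 0`. Contracted with the symmetric `τ^{bc}`, the first and last
terms cancel, leaving `½τ^{bc}∂ₐγ_{bc} + τ^{bc}ℓ_c U_{ba}`.
-/

open Finset

theorem Equiv.Perm.exists_ne_and_apply_ne {α : Type*} [Fintype α] [DecidableEq α]
    {σ : Equiv.Perm α} (hσ : σ ≠ 1) (i : α) : ∃ j ≠ i, σ j ≠ j := by
  by_contra! h
  refine hσ (Equiv.Perm.card_support_le_one.mp ?_)
  calc #σ.support ≤ #{i} := card_le_card fun j hj => by
        simpa using not_imp_comm.mp (h j) (Equiv.Perm.mem_support.mp hj)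
    _ = 1 := card_singleton i

namespace Matrix

variable {ι E : Type*} [Fintype ι] [DecidableEq ι] [NormedAddCommGroup E] [NormedSpace ℝ E]
  {M : E → Matrix ι ι ℝ} {M' : ι → ι → E →L[ℝ] ℝ} {x : E}

theorem hasFDerivAt_det_of_eq_one (hM : ∀ i j, HasFDerivAt (fun y => M y i j) (M' i j) x)
    (h1 : M x = 1) : HasFDerivAt (fun y => (M y).det) (∑ i, M' i i) x := by
  simp_rw [det_apply']
  refine (HasFDerivAt.fun_sum fun σ _ =>
    (HasFDerivAt.finsetProd (u := univ) fun i _ => hM (σ i) i).const_mul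
      ((Equiv.Perm.sign σ : ℤ) : ℝ)).congr_fderiv ?_
  rw [sum_eq_single 1 _ (by simp)]
  · simp [h1]
  · intro σ _ hσ
    refine smul_eq_zero.mpr (Or.inr (sum_eq_zero fun i _ => ?_))
    obtain ⟨j, hji, hj⟩ := σ.exists_ne_and_apply_ne hσ i
    rw [prod_eq_zero (mem_erase.mpr ⟨hji, mem_univ j⟩) (by simp [h1, hj]), zero_smul]

theorem hasFDerivAt_det (hM : ∀ i j, HasFDerivAt (fun y => M y i j) (M' i j) x)
    {B : Matrix ι ι ℝ} (hB : B * M x = 1) :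
    HasFDerivAt (fun y => (M y).det) ((M x).det • ∑ i, ∑ k, B i k • M' k i) x := by
  have hdet : (M x).det * B.det = 1 := by rw [mul_comm, ← det_mul, hB, det_one]
  have hBM : HasFDerivAt (fun y => (B * M y).det) (∑ i, ∑ k, B i k • M' k i) x :=
    hasFDerivAt_det_of_eq_one
      (fun i j => HasFDerivAt.fun_sum fun k _ => (hM k j).const_mul (B i k)) hB
  have hfun : (fun y => (M y).det) = fun y => (M x).det * (B * M y).det := by
    ext y
    rw [det_mul, ← mul_assoc, hdet, one_mul]
  exact hfun ▸ hBM.const_mul (M x).det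

end Matrix

theorem HasFDerivAt.sqrt_abs {E : Type*} [NormedAddCommGroup E] [NormedSpace ℝ E]
    {f : E → ℝ} {f' : E →L[ℝ] ℝ} {x : E} (hf : HasFDerivAt f f' x) (hx : f x ≠ 0) :
    HasFDerivAt (fun y => √|f y|) ((√|f x| / (2 * f x)) • f') x := by
  refine ((hf.abs hx).sqrt (abs_ne_zero.mpr hx)).congr_fderiv ?_
  rw [smul_smul]
  congr 1
  have hs : √|f x| ≠ 0 := by positivity
  have hsq : √|f x| * √|f x| = |f x| := Real.mul_self_sqrt (abs_nonneg _)
  rcases hx.lt_or_gt with hneg | hpos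
  · simp only [sign_neg hneg, SignType.coe_neg_one, _root_.abs_of_neg hneg] at hs hsq ⊢
    field_simp
    linear_combination -hsq
  · simp only [sign_pos hpos, SignType.coe_one, _root_.abs_of_pos hpos] at hs hsq ⊢
    field_simp
    linear_combination -hsq

namespace HypData

variable {m : ℕ}

section PartialDerivative

variable {a : Fin m} {f g : Sc m} {x : Fin m → ℝ}

theorem pd_eq_of_hasFDerivAt {f' : (Fin m → ℝ) →L[ℝ] ℝ} (h : HasFDerivAt f f' x) :
    pd a f x = f' (Pi.single a 1) := by
  rw [pd, h.fderiv]

theorem pd_congr_of_eqOn {U : Set (Fin m → ℝ)} (hU : IsOpen U) (hx : x ∈ U)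
    (h : Set.EqOn f g U) : pd a f x = pd a g x := by
  rw [pd, pd, (Filter.eventuallyEq_of_mem (hU.mem_nhds hx) h).fderiv_eq]

theorem pd_const (c : ℝ) : pd a (fun _ => c) x = 0 := by simp [pd]

theorem pd_add (hf : DifferentiableAt ℝ f x) (hg : DifferentiableAt ℝ g x) :
    pd a (fun y => f y + g y) x = pd a f x + pd a g x := by
  simp [pd, fderiv_fun_add hf hg]

theorem pd_mul (hf : DifferentiableAt ℝ f x) (hg : DifferentiableAt ℝ g x) :
    pd a (fun y => f y * g y) x = f x * pd a g x + g x * pd a f x := by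
  simp [pd, fderiv_fun_mul hf hg]

theorem pd_sum {ι : Type*} {s : Finset ι} {f : ι → Sc m}
    (h : ∀ i ∈ s, DifferentiableAt ℝ (f i) x) :
    pd a (fun y => ∑ i ∈ s, f i y) x = ∑ i ∈ s, pd a (f i) x := by
  simp [pd, fderiv_fun_sum h]

theorem pd_sqrt_abs (hf : DifferentiableAt ℝ f x) (hx : f x ≠ 0) :
    pd a (fun y => √|f y|) x = √|f x| * pd a f x / (2 * f x) := by
  rw [pd_eq_of_hasFDerivAt (hf.hasFDerivAt.sqrt_abs hx), pd]
  simp only [smul_apply, smul_eq_mul]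
  ring

end PartialDerivative

def blockInv (P : Ten m) (n : Vec m) (n2 : Sc m) (x : Fin m → ℝ) :
    Matrix (Fin m ⊕ Unit) (Fin m ⊕ Unit) ℝ :=
  fun i j =>
    match i, j with
    | Sum.inl a, Sum.inl b => P x a b
    | Sum.inl a, Sum.inr _ => n x a
    | Sum.inr _, Sum.inl b => n x b
    | Sum.inr _, Sum.inr _ => n2 x

theorem blockInv_mul_blockA {γ : Ten m} {ℓ : Vec m} {ℓ2 : Sc m} {P : Ten m} {n : Vec m}
    {n2 : Sc m} {x : Fin m → ℝ} (hγ : ∀ a b, γ x a b = γ x b a)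
    (h : InvBlocks (γ x) (ℓ x) (ℓ2 x) (P x) (n x) (n2 x)) :
    blockInv P n n2 x * blockA γ ℓ ℓ2 x = 1 := by
  obtain ⟨h1, h2, h3, h4⟩ := h
  ext (a | u) (b | v) <;>
    simp only [Matrix.mul_apply, Fintype.sum_sum_type, blockInv, blockA, Matrix.one_apply,
      univ_unique, sum_singleton, Sum.inl.injEq, reduceCtorEq, if_false]
  · exact h1 a b
  · linear_combination h2 a
  · simp_rw [← hγ b, mul_comm (n x _)]
    exact h4 b
  · simpa using h3

theorem SmSc.differentiableAt {U : Set (Fin m → ℝ)} {f : Sc m} (h : SmSc U f) (hU : IsOpen U)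
    {x : Fin m → ℝ} (hx : x ∈ U) : DifferentiableAt ℝ f x :=
  (h.contDiffAt (hU.mem_nhds hx)).differentiableAt (by simp)

theorem SmVec.differentiableAt {U : Set (Fin m → ℝ)} {f : Vec m} (h : SmVec U f)
    (hU : IsOpen U) {x : Fin m → ℝ} (hx : x ∈ U) (a : Fin m) :
    DifferentiableAt ℝ (fun y => f y a) x :=
  SmSc.differentiableAt (h a) hU hx

theorem SmTen.differentiableAt {U : Set (Fin m → ℝ)} {f : Ten m} (h : SmTen U f)
    (hU : IsOpen U) {x : Fin m → ℝ} (hx : x ∈ U) (a b : Fin m) :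
    DifferentiableAt ℝ (fun y => f y a b) x :=
  SmSc.differentiableAt (h a b) hU hx

/-- `tr(𝔸⁻¹ ∂ₐ𝔸)`, written out in blocks. -/
def traceInvPdA (γ : Ten m) (ℓ : Vec m) (ℓ2 : Sc m) (P : Ten m) (n : Vec m) (n2 : Sc m)
    (x : Fin m → ℝ) (a : Fin m) : ℝ :=
  (∑ c, ∑ d, P x c d * pd a (fun y => γ y d c) x)
    + 2 * (∑ c, n x c * pd a (fun y => ℓ y c) x) + n2 x * pd a ℓ2 x

namespace MetricData

variable {U : Set (Fin m → ℝ)} {γ : Ten m} {ℓ : Vec m} {ℓ2 : Sc m} {P : Ten m} {n : Vec m}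
  {n2 : Sc m} (hd : MetricData U γ ℓ ℓ2 P n n2) {x : Fin m → ℝ} (hx : x ∈ U)
include hd hx

theorem symm_γ (a b : Fin m) : γ x a b = γ x b a := hd.2.2.2.2.2.2.1 x hx a b

theorem symm_P (a b : Fin m) : P x a b = P x b a := hd.2.2.2.2.2.2.2.1 x hx a b

theorem invBlocks : InvBlocks (γ x) (ℓ x) (ℓ2 x) (P x) (n x) (n2 x) := hd.2.2.2.2.2.2.2.2 x hx

theorem detA_ne_zero : detA γ ℓ ℓ2 x ≠ 0 := by
  refine right_ne_zero_of_mul_eq_one (a := (blockInv P n n2 x).det) ?_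
  rw [detA, ← Matrix.det_mul, blockInv_mul_blockA (hd.symm_γ hx) (hd.invBlocks hx),
    Matrix.det_one]

variable (hU : IsOpen U)
include hU

theorem differentiableAt_γ (a b : Fin m) : DifferentiableAt ℝ (fun y => γ y a b) x :=
  hd.1.differentiableAt hU hx a b

theorem differentiableAt_ℓ (a : Fin m) : DifferentiableAt ℝ (fun y => ℓ y a) x :=
  hd.2.1.differentiableAt hU hx a

theorem differentiableAt_ℓ2 : DifferentiableAt ℝ ℓ2 x :=
  hd.2.2.1.differentiableAt hU hx

theorem differentiableAt_n (a : Fin m) : DifferentiableAt ℝ (fun y => n y a) x :=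
  hd.2.2.2.2.1.differentiableAt hU hx a

theorem differentiableAt_n2 : DifferentiableAt ℝ n2 x :=
  hd.2.2.2.2.2.1.differentiableAt hU hx

theorem pd_symm_γ (c a b : Fin m) : pd c (fun y => γ y a b) x = pd c (fun y => γ y b a) x :=
  pd_congr_of_eqOn hU hx fun _ hy => hd.symm_γ hy a b

theorem hasFDerivAt_detA : HasFDerivAt (detA γ ℓ ℓ2) (detA γ ℓ ℓ2 x • ∑ i, ∑ k,
      blockInv P n n2 x i k • fderiv ℝ (fun y => blockA γ ℓ ℓ2 y k i) x) x := by
  refine Matrix.hasFDerivAt_det (fun i j => DifferentiableAt.hasFDerivAt ?_)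
    (blockInv_mul_blockA (hd.symm_γ hx) (hd.invBlocks hx))
  rcases i with c | u <;> rcases j with d | v
  exacts [hd.differentiableAt_γ hx hU c d, hd.differentiableAt_ℓ hx hU c,
    hd.differentiableAt_ℓ hx hU d, hd.differentiableAt_ℓ2 hx hU]

theorem pd_detA (a : Fin m) :
    pd a (detA γ ℓ ℓ2) x = detA γ ℓ ℓ2 x * traceInvPdA γ ℓ ℓ2 P n n2 x a := by
  rw [pd_eq_of_hasFDerivAt (hd.hasFDerivAt_detA hx hU)]
  simp [traceInvPdA, pd, Fintype.sum_sum_type, blockInv, blockA, sum_add_distrib]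
  ring

theorem pd_sqrt_abs_detA (a : Fin m) :
    pd a (fun y => √|detA γ ℓ ℓ2 y|) x
      = √|detA γ ℓ ℓ2 x| * traceInvPdA γ ℓ ℓ2 P n n2 x a / 2 := by
  have hne := hd.detA_ne_zero hx
  rw [pd_sqrt_abs (hd.hasFDerivAt_detA hx hU).differentiableAt hne, hd.pd_detA hx hU]
  field_simp

theorem sum_Gam0_self_add (e : Fin m) :
    ∑ c, Gam0 γ ℓ P n x c c e + (n2 x * pd e ℓ2 x / 2 + ∑ c, Ff ℓ x e c * n x c)
      = traceInvPdA γ ℓ ℓ2 P n n2 x e / 2 := by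
  have hcancel : ∑ c, ∑ d, P x c d * pd c (fun y => γ y e d) x
      = ∑ c, ∑ d, P x c d * pd d (fun y => γ y c e) x := by
    rw [sum_comm]
    exact sum_congr rfl fun c _ => sum_congr rfl fun d _ => by
      rw [hd.pd_symm_γ hx hU d e c, hd.symm_P hx d c]
  have hsymm : ∑ c, ∑ d, P x c d * pd e (fun y => γ y c d) x
      = ∑ c, ∑ d, P x c d * pd e (fun y => γ y d c) x := by
    simp_rw [hd.pd_symm_γ hx hU e _ _]
  have hF : ∑ c, Ff ℓ x e c * n x c = (∑ c, n x c * pd e (fun y => ℓ y c) x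
      - ∑ c, n x c * pd c (fun y => ℓ y e) x) / 2 := by
    simp only [Ff, ← sum_sub_distrib, sum_div]
    exact sum_congr rfl fun c _ => by ring
  simp only [hF, Gam0, traceInvPdA, mul_add, mul_sub, sum_add_distrib,
    sum_sub_distrib, ← sum_div]
  rw [hcancel, hsymm]
  ring

theorem pd_γ_mul_n (b a : Fin m) :
    ∑ d, (γ x a d * pd b (fun y => n y d) x + n x d * pd b (fun y => γ y a d) x)
      + (n2 x * pd b (fun y => ℓ y a) x + ℓ x a * pd b n2 x) = 0 := by
  have h0 : pd b (fun y => ∑ d, γ y a d * n y d + n2 y * ℓ y a) x = 0 := by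
    rw [pd_congr_of_eqOn hU hx (g := fun _ => 0) fun y hy => (hd.invBlocks hy).2.2.2 a,
      pd_const]
  have hγn (d : Fin m) :=
    (hd.differentiableAt_γ hx hU a d).fun_mul (hd.differentiableAt_n hx hU d)
  have hn2ℓ := (hd.differentiableAt_n2 hx hU).fun_mul (hd.differentiableAt_ℓ hx hU a)
  rwa [pd_add (DifferentiableAt.fun_sum fun d _ => hγn d) hn2ℓ, pd_sum fun d _ => hγn d,
    sum_congr rfl fun d _ =>
      pd_mul (hd.differentiableAt_γ hx hU a d) (hd.differentiableAt_n hx hU d),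
    pd_mul (hd.differentiableAt_n2 hx hU) (hd.differentiableAt_ℓ hx hU a)] at h0

theorem Uf_eq (b a : Fin m) :
    Uf γ ℓ n n2 x b a
      = -((∑ c, n x c * (pd b (fun y => γ y a c) x + pd a (fun y => γ y b c) x
            - pd c (fun y => γ y b a) x))
          + n2 x * (pd b (fun y => ℓ y a) x + pd a (fun y => ℓ y b) x)) / 2 := by
  have hb := hd.pd_γ_mul_n hx hU b a
  have ha := hd.pd_γ_mul_n hx hU a b
  have hsymm : ∑ c, γ x c a * pd b (fun y => n y c) x
      = ∑ c, γ x a c * pd b (fun y => n y c) x :=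
    sum_congr rfl fun c _ => by rw [hd.symm_γ hx c a]
  simp only [Uf, mul_add, mul_sub, sum_add_distrib, sum_sub_distrib] at ha hb ⊢
  rw [hsymm]
  linear_combination (ha + hb) / 2

theorem sum_γ_mul_Gam0 (e b a : Fin m) :
    ∑ d, γ x e d * Gam0 γ ℓ P n x d b a
      = (pd b (fun y => γ y a e) x + pd a (fun y => γ y b e) x
          - pd e (fun y => γ y b a) x) / 2 + ℓ x e * Uf γ ℓ n n2 x b a := by
  obtain ⟨hPγ, -, -, hγn⟩ := hd.invBlocks hx
  set M : Fin m → ℝ := fun c => pd b (fun y => γ y a c) x + pd a (fun y => γ y b c) x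
    - pd c (fun y => γ y b a) x
  set L := pd b (fun y => ℓ y a) x + pd a (fun y => ℓ y b) x
  have hγP (c : Fin m) : ∑ d, γ x e d * P x d c = kd c e - n x c * ℓ x e := by
    rw [← hPγ c e]
    simp_rw [hd.symm_γ hx e, hd.symm_P hx _ c, mul_comm (γ x _ e)]
    ring
  have hexpand : ∑ d, γ x e d * Gam0 γ ℓ P n x d b a
      = ∑ c, (∑ d, γ x e d * P x d c) * M c / 2 + (∑ d, γ x e d * n x d) * L / 2 := by
    simp only [Gam0, mul_add, sum_add_distrib, mul_sum, sum_mul,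
      sum_div]
    rw [sum_comm (f := fun c d => γ x e d * P x d c * M c / 2)]
    congr 1
    · exact sum_congr rfl fun _ _ => sum_congr rfl fun _ _ => by ring
    · exact sum_congr rfl fun _ _ => by ring
  have hkd : ∑ c, (kd c e - n x c * ℓ x e) * M c = M e - ℓ x e * ∑ c, n x c * M c := by
    simp [kd, sub_mul, sum_sub_distrib, mul_sum, mul_assoc, mul_left_comm]
  rw [hexpand, sum_congr rfl fun c _ => by rw [hγP c], ← sum_div, hkd,
    eq_neg_of_add_eq_zero_left (hγn e), hd.Uf_eq hx hU b a]
  simp only [M, L]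
  ring

theorem sum_Gam0_mul_mixed (τ : Ten m) (hτ : ∀ b c, τ x b c = τ x c b) (a : Fin m) :
    ∑ b, ∑ d, Gam0 γ ℓ P n x d b a * ∑ c, τ x b c * γ x c d
      = ∑ b, ∑ c, τ x b c * ℓ x c * Uf γ ℓ n n2 x b a
        + (∑ b, ∑ c, τ x b c * pd a (fun y => γ y b c) x) / 2 := by
  have hlower : ∑ b, ∑ d, Gam0 γ ℓ P n x d b a * ∑ c, τ x b c * γ x c d
      = ∑ b, ∑ c, τ x b c * ∑ d, γ x c d * Gam0 γ ℓ P n x d b a := by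
    simp only [mul_sum]
    exact sum_congr rfl fun b _ => by
      rw [sum_comm]
      exact sum_congr rfl fun _ _ => sum_congr rfl fun _ _ => by ring
  have hswap : ∑ b, ∑ c, τ x b c * pd b (fun y => γ y a c) x
      = ∑ b, ∑ c, τ x b c * pd c (fun y => γ y b a) x := by
    rw [sum_comm]
    exact sum_congr rfl fun c _ => sum_congr rfl fun b _ => by
      rw [hτ, hd.pd_symm_γ hx hU b a c]
  simp only [hlower, hd.sum_γ_mul_Gam0 hx hU, mul_add, mul_sub, mul_div_assoc',
    sum_add_distrib, sum_sub_distrib, ← sum_div, mul_assoc]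
  linear_combination hswap / 2

theorem sum_covD1U_Gam0_add_eq (X : Vec m)
    (hX : ∀ a, DifferentiableAt ℝ (fun y => X y a) x) :
    ∑ a, covD1U (Gam0 γ ℓ P n) X x a a
        + ∑ a, X x a * (n2 x * pd a ℓ2 x / 2 + ∑ c, Ff ℓ x a c * n x c)
      = (√|detA γ ℓ ℓ2 x|)⁻¹
          * ∑ a, pd a (fun y => √|detA γ ℓ ℓ2 y| * X y a) x := by
  have hsqrt : DifferentiableAt ℝ (fun y => √|detA γ ℓ ℓ2 y|) x :=
    ((hd.hasFDerivAt_detA hx hU).sqrt_abs (hd.detA_ne_zero hx)).differentiableAt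
  have hpos : √|detA γ ℓ ℓ2 x| ≠ 0 := by
    have := hd.detA_ne_zero hx
    positivity
  have htrace : ∑ a, ∑ d, Gam0 γ ℓ P n x a a d * X x d
      = ∑ d, X x d * (traceInvPdA γ ℓ ℓ2 P n n2 x d / 2
          - (n2 x * pd d ℓ2 x / 2 + ∑ c, Ff ℓ x d c * n x c)) := by
    rw [sum_comm]
    exact sum_congr rfl fun d _ => by
      rw [← sum_mul, ← hd.sum_Gam0_self_add hx hU d]
      ring
  simp only [covD1U, sum_add_distrib]
  rw [htrace, mul_sum, ← sum_add_distrib, ← sum_add_distrib]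
  simp only [pd_mul hsqrt (hX _), hd.pd_sqrt_abs_detA hx hU]
  exact sum_congr rfl fun a _ => by field_simp; ring

end MetricData

theorem covD11_eq_covD1U_sub (Γ : Conn m) (S : Ten m) (x : Fin m → ℝ) (a b c : Fin m) :
    covD11 Γ S x a b c = covD1U Γ (fun y b => S y b c) x a b - ∑ d, Γ x d a c * S x b d :=
  rfl

end HypData

open HypData in
theorem statement18_general (m : ℕ) (U : Set (Fin m → ℝ)) (hU : IsOpen U)
    (γ : Ten m) (ℓ : Vec m) (ℓ2 : Sc m) (P : Ten m) (n : Vec m) (n2 : Sc m)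
    (hdata : MetricData U γ ℓ ℓ2 P n n2)
    (τ : Ten m) (hτsm : SmTen U τ) (hτs : ∀ x ∈ U, ∀ a b, τ x a b = τ x b a) :
    -- (1)
    ((∀ x ∈ U,
      (∑ a, covD1U (Gam0 γ ℓ P n) (fun y a' => ∑ b, τ y a' b * ℓ y b) x a a)
        + (∑ a, (∑ b, τ x a b * ℓ x b)
            * (n2 x * pd a ℓ2 x / 2 + ∑ c, Ff ℓ x a c * n x c))
      = (Real.sqrt (|detA γ ℓ ℓ2 x|))⁻¹
          * ∑ a, pd a (fun y => Real.sqrt (|detA γ ℓ ℓ2 y|)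
              * ∑ b, τ y a b * ℓ y b) x)
    -- (2)
    ∧ (∀ x ∈ U, ∀ a,
      (∑ b, covD11 (Gam0 γ ℓ P n) (fun y b' a' => ∑ c, τ y b' c * γ y c a') x b b a)
        + (∑ b, (∑ c, τ x b c * γ x c a)
            * (n2 x * pd b ℓ2 x / 2 + ∑ c, Ff ℓ x b c * n x c))
        + (∑ b, ∑ c, τ x b c * ℓ x c * Uf γ ℓ n n2 x b a)
      = (Real.sqrt (|detA γ ℓ ℓ2 x|))⁻¹
          * (∑ b, pd b (fun y => Real.sqrt (|detA γ ℓ ℓ2 y|)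
              * ∑ c, τ y b c * γ y c a) x)
        - (∑ b, ∑ d, τ x b d * pd a (fun y => γ y b d) x) / 2)) := by
  refine ⟨fun x hx => ?_, fun x hx a => ?_⟩
  · refine hdata.sum_covD1U_Gam0_add_eq hx hU _ fun a => ?_
    exact DifferentiableAt.fun_sum fun b _ =>
      (hτsm.differentiableAt hU hx a b).fun_mul (hdata.differentiableAt_ℓ hx hU b)
  · have hdiv := hdata.sum_covD1U_Gam0_add_eq hx hU (fun y b => ∑ c, τ y b c * γ y c a)
      fun b => DifferentiableAt.fun_sum fun c _ =>
        (hτsm.differentiableAt hU hx b c).fun_mul (hdata.differentiableAt_γ hx hU c a)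
    have hcontract := hdata.sum_Gam0_mul_mixed hx hU τ (hτs x hx) a
    simp only [covD11_eq_covD1U_sub, sum_sub_distrib]
    linear_combination hdiv - hcontract

open HypData in
/-- Lemma 9 of the paper, the divergence (coordinate) form of the
two shell-equation left-hand sides, for an arbitrary smooth symmetric `τ^{ab}`. -/
theorem statement18 (m : ℕ) (hm : 1 ≤ m) (U : Set (Fin m → ℝ)) (hU : IsOpen U)
    (γ : Ten m) (ℓ : Vec m) (ℓ2 : Sc m) (P : Ten m) (n : Vec m) (n2 : Sc m)
    (hdata : MetricData U γ ℓ ℓ2 P n n2)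
    (τ : Ten m) (hτsm : SmTen U τ) (hτs : ∀ x ∈ U, ∀ a b, τ x a b = τ x b a) :
    -- (1)
    ((∀ x ∈ U,
      (∑ a, covD1U (Gam0 γ ℓ P n) (fun y a' => ∑ b, τ y a' b * ℓ y b) x a a)
        + (∑ a, (∑ b, τ x a b * ℓ x b)
            * (n2 x * pd a ℓ2 x / 2 + ∑ c, Ff ℓ x a c * n x c))
      = (Real.sqrt (|detA γ ℓ ℓ2 x|))⁻¹
          * ∑ a, pd a (fun y => Real.sqrt (|detA γ ℓ ℓ2 y|)
              * ∑ b, τ y a b * ℓ y b) x)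
    -- (2)
    ∧ (∀ x ∈ U, ∀ a,
      (∑ b, covD11 (Gam0 γ ℓ P n) (fun y b' a' => ∑ c, τ y b' c * γ y c a') x b b a)
        + (∑ b, (∑ c, τ x b c * γ x c a)
            * (n2 x * pd b ℓ2 x / 2 + ∑ c, Ff ℓ x b c * n x c))
        + (∑ b, ∑ c, τ x b c * ℓ x c * Uf γ ℓ n n2 x b a)
      = (Real.sqrt (|detA γ ℓ ℓ2 x|))⁻¹
          * (∑ b, pd b (fun y => Real.sqrt (|detA γ ℓ ℓ2 y|)
              * ∑ c, τ y b c * γ y c a) x)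
        - (∑ b, ∑ d, τ x b d * pd a (fun y => γ y b d) x) / 2)) :=
  statement18_general m U hU γ ℓ ℓ2 P n n2 hdata τ hτsm hτs
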